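/- arXiv:2603.10250 — 4 statements merged into one kernel-verified Lean document; each statement's English description precedes it below -/
import Mathlib

section
/- Policy improvement for signed reweighting: let π be a probability mass function on a finite action set, Q : actions → ℝ, g : ℝ → ℝ strictly increasing, λ > 0, ν ∈ ℝ, and define π̃(a) = π(a) * g((Q a - ν)/λ). If ∑ a, π̃ a = 1 (π̃ may take negative values), then ∑ a, π̃ a * Q a ≥ ∑ a, π a * Q a. -/
/-!
The reweighting factor `f a = g ((Q a - ν) / lam)` is a monotone function of `Q a`, so `f` and
`Q` are similarly ordered. Chebyshev's sum inequality for the probability weights `π` then gives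
`𝔼[f Q] ≥ 𝔼[f] 𝔼[Q]`, and the normalisation `𝔼[f] = 1` turns this into `𝔼_π̃[Q] ≥ 𝔼_π[Q]`.
-/

open Finset

variable {ι R : Type*} [Fintype ι] [CommRing R] [LinearOrder R] [IsStrictOrderedRing R]

/-- Weighted Chebyshev sum inequality. -/
theorem Monovary.sum_mul_sum_le_sum_mul_sum_of_nonneg {w f g : ι → R} (hw : ∀ i, 0 ≤ w i)
    (hfg : Monovary f g) :
    (∑ i, w i * f i) * (∑ i, w i * g i) ≤ (∑ i, w i) * ∑ i, w i * (f i * g i) := by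
  have hpairs : 0 ≤ ∑ i, ∑ j, w i * w j * ((f i - f j) * (g i - g j)) :=
    sum_nonneg fun i _ ↦ sum_nonneg fun j _ ↦
      mul_nonneg (mul_nonneg (hw i) (hw j)) (hfg.sub_mul_sub_nonneg j i)
  set D := (∑ i, w i) * ∑ i, w i * (f i * g i) - (∑ i, w i * f i) * (∑ i, w i * g i)
  have hD : D = ∑ i, ∑ j, (w i * (w j * (f j * g j)) - w i * f i * (w j * g j)) := by
    simp only [D, sum_mul_sum, ← sum_sub_distrib]
  have hD' : D = ∑ i, ∑ j, (w j * (w i * (f i * g i)) - w j * f j * (w i * g i)) := by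
    rw [hD, sum_comm]
  have hexpand : ∑ i, ∑ j, w i * w j * ((f i - f j) * (g i - g j)) = 2 * D := by
    rw [two_mul]
    nth_rw 1 [hD]
    rw [hD']
    simp only [← sum_add_distrib]
    exact sum_congr rfl fun i _ ↦ sum_congr rfl fun j _ ↦ by ring
  linarith

theorem Monovary.sum_mul_le_sum_mul_mul {w f g : ι → R} (hw : ∀ i, 0 ≤ w i)
    (hfg : Monovary f g) (hw₁ : ∑ i, w i = 1) (hf₁ : ∑ i, w i * f i = 1) :
    ∑ i, w i * g i ≤ ∑ i, w i * (f i * g i) := by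
  simpa [hw₁, hf₁] using hfg.sum_mul_sum_le_sum_mul_sum_of_nonneg hw

/-- Policy improvement for signed reweighting. -/
theorem stmt_1 (n : ℕ) (π Q : Fin n → ℝ) (g : ℝ → ℝ) (lam ν : ℝ)
    (hπ : ∀ a, 0 ≤ π a) (hsum : ∑ a, π a = 1)
    (hg : StrictMono g) (hlam : 0 < lam)
    (πt : Fin n → ℝ) (hπt : ∀ a, πt a = π a * g ((Q a - ν) / lam))
    (hnorm : ∑ a, πt a = 1) :
    ∑ a, πt a * Q a ≥ ∑ a, π a * Q a := by
  have hweight : Monotone fun q ↦ g ((q - ν) / lam) := fun q q' hq ↦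
    hg.monotone (div_le_div_of_nonneg_right (sub_le_sub_right hq ν) hlam.le)
  have hmono : Monovary (fun a ↦ g ((Q a - ν) / lam)) Q :=
    (monovary_self Q).comp_monotone_left hweight
  have hf₁ : ∑ a, π a * g ((Q a - ν) / lam) = 1 := by simpa only [hπt] using hnorm
  simpa only [hπt, mul_assoc] using hmono.sum_mul_le_sum_mul_mul hπ hsum hf₁
end

section
/- For λ > 0 and q : Fin N → ℝ, the derivative with respect to λ of f(λ) = λ * log(∑ᵢ exp(qᵢ/λ)) equals the Shannon entropy H(p) = -∑ᵢ pᵢ log pᵢ of the softmax distribution pᵢ = exp(qᵢ/λ) / ∑ⱼ exp(qⱼ/λ). -/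
/-!
Write `Z(t) = ∑ᵢ exp(qᵢ/t)` and `pᵢ = exp(qᵢ/x)/Z(x)`. Differentiating under the finite sum gives
`Z'(x) = -(∑ᵢ qᵢ exp(qᵢ/x))/x²`, so `d/dt [t log Z(t)] = log Z(x) - ∑ᵢ pᵢ qᵢ/x` at `t = x`.
Since `log pᵢ = qᵢ/x - log Z(x)` and `∑ᵢ pᵢ = 1`, the entropy `-∑ᵢ pᵢ log pᵢ` is the same expression.
-/

open Finset Real

theorem hasDerivAt_exp_const_div (a : ℝ) {x : ℝ} (hx : x ≠ 0) :
    HasDerivAt (fun t => exp (a / t)) (-(a * exp (a / x)) / x ^ 2) x := by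
  have hdiv : HasDerivAt (fun t => a / t) (-a / x ^ 2) x := by
    simpa using (hasDerivAt_const x a).fun_div (hasDerivAt_id' x) hx
  exact hdiv.exp.congr_deriv (by ring)

section

variable {ι : Type*} [Fintype ι] (q : ι → ℝ)

theorem hasDerivAt_sum_exp_div {x : ℝ} (hx : x ≠ 0) :
    HasDerivAt (fun t => ∑ i, exp (q i / t)) (-(∑ i, q i * exp (q i / x)) / x ^ 2) x := by
  rw [← sum_neg_distrib, sum_div]
  exact HasDerivAt.fun_sum fun i _ => hasDerivAt_exp_const_div (q i) hx

theorem sum_exp_div_pos [Nonempty ι] (x : ℝ) : 0 < ∑ i, exp (q i / x) :=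
  sum_pos (fun _ _ => exp_pos _) univ_nonempty

theorem hasDerivAt_mul_log_sum_exp_div [Nonempty ι] {x : ℝ} (hx : x ≠ 0) :
    HasDerivAt (fun t => t * log (∑ i, exp (q i / t)))
      (log (∑ i, exp (q i / x)) - (∑ i, q i * exp (q i / x)) / (x * ∑ i, exp (q i / x))) x := by
  have hZ := (sum_exp_div_pos q x).ne'
  refine ((hasDerivAt_id' x).mul ((hasDerivAt_sum_exp_div q hx).log hZ)).congr_deriv ?_
  field_simp
  ring

theorem log_exp_div_sum_exp [Nonempty ι] (x : ℝ) (i : ι) :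
    log (exp (q i / x) / ∑ j, exp (q j / x)) = q i / x - log (∑ j, exp (q j / x)) := by
  rw [log_div (exp_pos _).ne' (sum_exp_div_pos q x).ne', log_exp]

theorem sum_exp_div_sum_exp [Nonempty ι] (x : ℝ) :
    ∑ i, exp (q i / x) / ∑ j, exp (q j / x) = 1 := by
  rw [← sum_div, div_self (sum_exp_div_pos q x).ne']

theorem entropy_softmax [Nonempty ι] (x : ℝ) :
    -∑ i, (exp (q i / x) / ∑ j, exp (q j / x)) * log (exp (q i / x) / ∑ j, exp (q j / x)) =
      log (∑ i, exp (q i / x)) - (∑ i, q i * exp (q i / x)) / (x * ∑ i, exp (q i / x)) := by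
  have hpq : ∀ i, exp (q i / x) / (∑ j, exp (q j / x)) * (q i / x) =
      q i * exp (q i / x) / (x * ∑ j, exp (q j / x)) := fun i => by
    rw [div_mul_div_comm, mul_comm (exp _), mul_comm (∑ j, _)]
  simp only [log_exp_div_sum_exp q x, mul_sub, sum_sub_distrib, ← sum_mul, hpq]
  rw [sum_exp_div_sum_exp, ← sum_div]
  ring

end

/-- The derivative in `λ` of `f(λ) = λ · log ∑ᵢ exp(qᵢ/λ)` equals the Shannon
entropy `H(p) = -∑ pᵢ log pᵢ` of the softmax distribution `pᵢ = exp(qᵢ/λ)/Z`. -/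
theorem stmt_7 (N : ℕ) (hN : 0 < N) (q : Fin N → ℝ) (lam : ℝ) (hlam : 0 < lam) :
    HasDerivAt (fun t : ℝ => t * Real.log (∑ i, Real.exp (q i / t)))
      (-∑ i, (Real.exp (q i / lam) / ∑ j, Real.exp (q j / lam)) *
          Real.log (Real.exp (q i / lam) / ∑ j, Real.exp (q j / lam))) lam := by
  have : Nonempty (Fin N) := ⟨⟨0, hN⟩⟩
  rw [entropy_softmax]
  exact hasDerivAt_mul_log_sum_exp_div q hlam.ne'
end

section
/- Closed form for the linear ReLU normalization: let x₁ ≥ x₂ ≥ … ≥ x_N be real numbers, l > 0, and suppose k ∈ {1,…,N} is the unique index such that v := (∑_{j≤k} x_j - N·l)/k satisfies x_{k+1} ≤ v < x_k (with x_{N+1} := -∞). Then v is the unique real number satisfying (1/N)∑_{i=1}^N max(xᵢ - v, 0)/l = 1. -/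
open Finset

/-!
The map `v ↦ ∑ᵢ max (xᵢ - v) 0` is strictly decreasing wherever it is positive, so the
normalization equation has at most one solution. If `v` strictly separates the `k` largest
samples from the rest, the sum at `v` is `∑_{j<k} x_j - k v`, which the defining formula for `v`
makes equal to `N l`.
-/

section ReluSum

variable {ι : Type*} [Fintype ι] (x : ι → ℝ)

theorem sum_max_sub_zero_eq_of_separates (s : Finset ι) {v : ℝ}
    (hin : ∀ i ∈ s, v < x i) (hout : ∀ i ∉ s, x i ≤ v) :
    ∑ i, max (x i - v) 0 = ∑ i ∈ s, x i - #s * v := by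
  calc ∑ i, max (x i - v) 0 = ∑ i ∈ s, max (x i - v) 0 :=
        (sum_subset (subset_univ s) fun i _ hi => max_eq_right (by linarith [hout i hi])).symm
    _ = ∑ i ∈ s, (x i - v) := sum_congr rfl fun i hi => max_eq_left (by linarith [hin i hi])
    _ = ∑ i ∈ s, x i - #s * v := by rw [sum_sub_distrib, sum_const, nsmul_eq_mul]

theorem sum_max_sub_zero_lt_of_lt {v w : ℝ} (hvw : v < w)
    (hpos : 0 < ∑ i, max (x i - v) 0) :
    ∑ i, max (x i - w) 0 < ∑ i, max (x i - v) 0 := by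
  obtain ⟨i, -, hi⟩ := exists_lt_of_sum_lt (s := univ) (f := fun _ => 0)
    (g := fun i => max (x i - v) 0) (by rwa [sum_const_zero])
  refine sum_lt_sum (fun j _ => max_le_max (by linarith) le_rfl) ⟨i, mem_univ i, ?_⟩
  have hxi : 0 < x i - v := (lt_max_iff.mp hi).resolve_right (lt_irrefl 0)
  rw [max_eq_left hxi.le]
  exact max_lt (by linarith) (by linarith)

theorem eq_of_sum_max_sub_zero_eq {v w : ℝ} (hpos : 0 < ∑ i, max (x i - v) 0)
    (h : ∑ i, max (x i - w) 0 = ∑ i, max (x i - v) 0) : w = v := by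
  rcases lt_trichotomy w v with hwv | hwv | hvw
  · exact absurd h (sum_max_sub_zero_lt_of_lt x hwv (h ▸ hpos)).ne'
  · exact hwv
  · exact absurd h (sum_max_sub_zero_lt_of_lt x hvw hpos).ne

end ReluSum

theorem one_div_mul_sum_div_eq_one_iff {ι : Type*} [Fintype ι] (f : ι → ℝ) {n l : ℝ}
    (hn : n ≠ 0) (hl : l ≠ 0) : 1 / n * ∑ i, f i / l = 1 ↔ ∑ i, f i = n * l := by
  rw [← sum_div]
  constructor <;> intro h <;> field_simp at h ⊢ <;> linarith

theorem stmt_14_general (N : ℕ) (x : Fin N → ℝ) (l : ℝ) (hl : 0 < l)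
    (k : ℕ) (hk1 : 1 ≤ k) (hk2 : k ≤ N)
    (v : ℝ)
    (hv : v = ((∑ j : Fin N, if (j : ℕ) < k then x j else 0) - N * l) / k)
    (hactive : ∀ j : Fin N, (j : ℕ) < k → v < x j)
    (hinactive : ∀ j : Fin N, k ≤ (j : ℕ) → x j ≤ v) :
    ((1 : ℝ) / N) * ∑ i, max (x i - v) 0 / l = 1 ∧
    ∀ v' : ℝ, ((1 : ℝ) / N) * (∑ i, max (x i - v') 0 / l) = 1 → v' = v := by
  have hN : (N : ℝ) ≠ 0 := Nat.cast_ne_zero.mpr (by omega)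
  have hk : (k : ℝ) ≠ 0 := Nat.cast_ne_zero.mpr (by omega)
  set s : Finset (Fin N) := {j | (j : ℕ) < k}
  have hcard : #s = k := by rw [Fin.card_filter_val_lt, min_eq_right hk2]
  have hsum : ∑ i, max (x i - v) 0 = N * l := by
    rw [sum_max_sub_zero_eq_of_separates x s (fun j hj => hactive j (mem_filter.mp hj).2)
      (fun j hj => hinactive j (by simpa [s] using hj)), hcard, hv, ← sum_filter]
    field_simp
    ring
  refine ⟨(one_div_mul_sum_div_eq_one_iff _ hN hl.ne').mpr hsum, fun v' hv' => ?_⟩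
  exact eq_of_sum_max_sub_zero_eq x (by rw [hsum]; exact mul_pos (by positivity) hl)
    (((one_div_mul_sum_div_eq_one_iff _ hN hl.ne').mp hv').trans hsum.symm)

/-- Closed form for the linear ReLU normalization: for descending samples `x₁ ≥ … ≥ x_N`
and `l > 0`, if `k` is an index such that `v := (∑_{j ≤ k} x_j - N·l)/k` separates the
top `k` samples from the rest (`xᵢ > v` for the `k` largest, `xᵢ ≤ v` for the others),
then `v` is the unique solution of `(1/N) ∑ᵢ max(xᵢ - v, 0)/l = 1`. -/
theorem stmt_14 (N : ℕ) (x : Fin N → ℝ) (l : ℝ) (hl : 0 < l)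
    (hsort : ∀ i j : Fin N, i ≤ j → x j ≤ x i)
    (k : ℕ) (hk1 : 1 ≤ k) (hk2 : k ≤ N)
    (v : ℝ)
    (hv : v = ((∑ j : Fin N, if (j : ℕ) < k then x j else 0) - N * l) / k)
    (hactive : ∀ j : Fin N, (j : ℕ) < k → v < x j)
    (hinactive : ∀ j : Fin N, k ≤ (j : ℕ) → x j ≤ v) :
    ((1 : ℝ) / N) * ∑ i, max (x i - v) 0 / l = 1 ∧
    ∀ v' : ℝ, ((1 : ℝ) / N) * (∑ i, max (x i - v') 0 / l) = 1 → v' = v :=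
  stmt_14_general N x l hl k hk1 hk2 v hv hactive hinactive
end

section
/- Uniqueness of the ReLU normalizer: for any x : Fin N → ℝ not all equal (or N ≥ 1 with max xᵢ finite) and any l > 0, the function φ(v) = (1/N)∑ᵢ max(xᵢ - v, 0)/l is continuous, strictly decreasing on (-∞, max xᵢ), tends to +∞ as v → -∞ and equals 0 for v ≥ max xᵢ; hence there exists a unique v with φ(v) = 1. -/
open Finset Filter

/-!
Up to the positive factor `1 / (N l)`, `φ` is the sum of the hinge functions `v ↦ max (xᵢ - v) 0`.
Each is continuous and antitone, the one at an index attaining `M = max xᵢ` is strictly decreasing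
on `(-∞, M)` and grows linearly as `v → -∞`, and all of them vanish on `[M, ∞)`. By the
intermediate value theorem on `[v₀, M]`, for `v₀` far to the left, `φ` takes the value `1`; a
solution must lie in `(-∞, M)`, where `φ` is injective.
-/

section HingeSum

variable {ι : Type*} (s : Finset ι) (x : ι → ℝ)

theorem continuous_sum_max_sub_zero : Continuous fun v => ∑ i ∈ s, max (x i - v) 0 := by
  fun_prop

theorem sum_max_sub_zero_eq_zero {v : ℝ} (hv : ∀ i ∈ s, x i ≤ v) :
    ∑ i ∈ s, max (x i - v) 0 = 0 :=
  Finset.sum_eq_zero fun i hi => max_eq_right (sub_nonpos.mpr (hv i hi))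

theorem strictAntiOn_sum_max_sub_zero (hs : s.Nonempty) :
    StrictAntiOn (fun v => ∑ i ∈ s, max (x i - v) 0) (Set.Iio (s.sup' hs x)) := by
  intro a _ b hb hab
  obtain ⟨j, hj, hbj⟩ := (Finset.lt_sup'_iff hs).mp (Set.mem_Iio.mp hb)
  refine Finset.sum_lt_sum (fun i _ => max_le_max (by linarith) le_rfl) ⟨j, hj, ?_⟩
  rw [max_eq_left (by linarith), max_eq_left (by linarith)]
  linarith

theorem tendsto_sum_max_sub_zero_atBot (hs : s.Nonempty) :
    Tendsto (fun v => ∑ i ∈ s, max (x i - v) 0) atBot atTop := by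
  obtain ⟨j, hj⟩ := hs
  have hlower : ∀ v, x j - v ≤ ∑ i ∈ s, max (x i - v) 0 := fun v =>
    (le_max_left _ _).trans
      (Finset.single_le_sum (f := fun i => max (x i - v) 0) (fun _ _ => le_max_right _ _) hj)
  refine tendsto_atTop_mono hlower ?_
  exact (tendsto_atTop_add_const_left atBot (x j) tendsto_neg_atBot_atTop).congr
    fun v => (sub_eq_add_neg _ _).symm

end HingeSum

theorem existsUnique_eq_of_strictAntiOn_Iio {f : ℝ → ℝ} {M a : ℝ} (hf : Continuous f)
    (hanti : StrictAntiOn f (Set.Iio M)) (htop : Tendsto f atBot atTop)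
    (hzero : ∀ v, M ≤ v → f v = 0) (ha : 0 < a) : ∃! v, f v = a := by
  have hlt : ∀ v, f v = a → v < M := fun v hv =>
    not_le.mp fun hMv => ha.ne' (hv ▸ hzero v hMv)
  obtain ⟨v₀, hv₀a, hv₀M⟩ := ((htop.eventually_ge_atTop a).and (eventually_lt_atBot M)).exists
  obtain ⟨c, -, hc⟩ := intermediate_value_Icc' hv₀M.le hf.continuousOn
    ⟨(hzero M le_rfl).symm ▸ ha.le, hv₀a⟩
  exact ⟨c, hc, fun v hv => hanti.injOn (hlt v hv) (hlt c hc) (hv.trans hc.symm)⟩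

/-- Uniqueness of the ReLU normalizer: `φ(v) = (1/N) ∑ᵢ max(xᵢ - v, 0)/l` is continuous,
strictly decreasing on `(-∞, max xᵢ)`, tends to `+∞` as `v → -∞`, vanishes for
`v ≥ max xᵢ`, and hence there is a unique `v` with `φ(v) = 1`. -/
theorem stmt_15 (N : ℕ) (hN : 1 ≤ N) (x : Fin N → ℝ) (l : ℝ) (hl : 0 < l)
    (φ : ℝ → ℝ) (hφ : ∀ v, φ v = ((1 : ℝ) / N) * ∑ i, max (x i - v) 0 / l)
    (M : ℝ) (hM : M = Finset.univ.sup' ⟨⟨0, hN⟩, Finset.mem_univ _⟩ x) :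
    Continuous φ ∧
    StrictAntiOn φ (Set.Iio M) ∧
    Tendsto φ atBot atTop ∧
    (∀ v, M ≤ v → φ v = 0) ∧
    (∃! v : ℝ, φ v = 1) := by
  have hne : (Finset.univ : Finset (Fin N)).Nonempty := ⟨⟨0, hN⟩, Finset.mem_univ _⟩
  set c : ℝ := ((N : ℝ) * l)⁻¹
  have hc : 0 < c := by
    have : (0 : ℝ) < N := by exact_mod_cast hN
    positivity
  set S : ℝ → ℝ := fun v => ∑ i, max (x i - v) 0
  obtain rfl : φ = fun v => c * S v := funext fun v => by rw [hφ, ← Finset.sum_div]; ring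
  subst hM
  have hcont : Continuous fun v => c * S v :=
    continuous_const.mul (continuous_sum_max_sub_zero univ x)
  have hanti : StrictAntiOn (fun v => c * S v) (Set.Iio (univ.sup' hne x)) := fun a ha b hb hab =>
    mul_lt_mul_of_pos_left (strictAntiOn_sum_max_sub_zero univ x hne ha hb hab) hc
  have htop : Tendsto (fun v => c * S v) atBot atTop :=
    (tendsto_sum_max_sub_zero_atBot univ x hne).const_mul_atTop hc
  have hzero : ∀ v, univ.sup' hne x ≤ v → c * S v = 0 := fun v hv => by
    rw [show S v = 0 from sum_max_sub_zero_eq_zero univ x fun i hi => (le_sup' x hi).trans hv,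
      mul_zero]
  exact ⟨hcont, hanti, htop, hzero,
    existsUnique_eq_of_strictAntiOn_Iio hcont hanti htop hzero one_pos⟩
end
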